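/- arXiv:2312.09363 — 2 statements merged into one kernel-verified Lean document; each statement's English description precedes it below -/
import Mathlib

section
/- Let (X,d,μ) be a proper metric measure space of bounded geometry with no isolated points, and let D ⊆ X be a Delone set. Then there exists a family {V_u}_{u∈D} of open subsets of X such that: (V1) B_{r(D)/2}(u) ⊆ V_u ⊆ B_{2R(D)}(u) for every u ∈ D; (V2) V_u ∩ V_v = ∅ for all distinct u,v ∈ D, and X = ⋃_{u∈D} \overline{V_u}; (V3) for every u ∈ D and every ε > 0 there exists δ > 0 such that μ(V_u \ V_u^{(-δ)}) < ε, where V^{(-δ)} = {x ∈ X : d(x, X \ V) > δ}; and (V4) L²(V_u, μ) is infinite-dimensional for every u ∈ D. -/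
open Metric Set MeasureTheory ENNReal

/-- `D` is `s`-discrete: distinct points of `D` are at distance at least `s`. -/
def IsDiscreteWith {X : Type*} [MetricSpace X] (s : ℝ) (D : Set X) : Prop :=
  ∀ x ∈ D, ∀ y ∈ D, x ≠ y → s ≤ dist x y

/-- `D` is `R`-dense: every point of `X` is within distance `R` of `D`. -/
def IsDenseWith {X : Type*} [MetricSpace X] (R : ℝ) (D : Set X) : Prop :=
  ∀ x : X, ∃ y ∈ D, dist x y ≤ R

/-- `D` is a Delone set: `r`-discrete and `R`-dense for some `r, R > 0`. -/
def IsDelone {X : Type*} [MetricSpace X] (D : Set X) : Prop :=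
  ∃ r > (0 : ℝ), ∃ R > (0 : ℝ), IsDiscreteWith r D ∧ IsDenseWith R D

/-- `r(D)`: the infimum of distances between distinct points of `D`. -/
noncomputable def rSep {X : Type*} [MetricSpace X] (D : Set X) : ℝ :=
  sInf {t : ℝ | ∃ x ∈ D, ∃ y ∈ D, x ≠ y ∧ t = dist x y}

/-- `R(D)`: the infimum of the `R` such that `D` is `R`-dense. -/
noncomputable def RDen {X : Type*} [MetricSpace X] (D : Set X) : ℝ :=
  sInf {R : ℝ | IsDenseWith R D}

/-- A metric measure space of bounded geometry. -/
def BoundedGeometry {X : Type*} [MetricSpace X] [MeasurableSpace X] (μ : Measure X) : Prop :=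
  ∀ R > (0 : ℝ), ∃ c C : ℝ≥0∞, 0 < c ∧ C < ⊤ ∧
    ∀ x : X, c ≤ μ (ball x R) ∧ μ (ball x R) ≤ C

/-!
Well-order `D` and give each `u ∈ D` the cell consisting of its small ball `B(u, r(D)/2)` together
with the points of `B(u, 2R(D))` that lie outside the closures of the large balls of the earlier
points and of the small balls of all other points. Each cell avoids the earlier large balls and the
other small balls, which makes the cells pairwise disjoint. Since `D` is uniformly discrete in a
proper space, both families of balls are locally finite, so closures of their unions are unions of
closures. A point therefore lies in the closure of the cell of the first point whose large ball it
touches, unless it already lies in the closure of some small ball.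

(V3) is continuity from above of the measure of the bounded open cell, and (V4) holds because the
neighbourhoods of a non-isolated point contain infinitely many disjoint balls, each of positive
finite measure, whose indicators are orthogonal in `L²`.
-/

open Filter Topology Function

section VoronoiCell

variable {X : Type*} [TopologicalSpace X]

theorem LocallyFinite.closure_biUnion_of_subset {ι : Type*} {f : ι → Set X} {D S : Set ι}
    (hf : LocallyFinite fun i : D => f i) (hS : S ⊆ D) :
    closure (⋃ i ∈ S, f i) = ⋃ i ∈ S, closure (f i) := by
  rw [biUnion_eq_iUnion, biUnion_eq_iUnion]
  exact (hf.comp_injective (inclusion_injective hS)).closure_iUnion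

/-- Removing `u` from the envelope `E u` leaves a point outside the cell even when `D = {u}` and
`E u` is the whole space. -/
def voronoiCell (r : X → X → Prop) (D : Set X) (B E : X → Set X) (u : X) : Set X :=
  B u ∪ ((E u \ {u}) \ (closure (⋃ v ∈ {v ∈ D | r v u}, E v) ∪ closure (⋃ v ∈ D \ {u}, B v)))

variable {r : X → X → Prop} {D : Set X} {B E : X → Set X} {u v : X}

theorem subset_voronoiCell : B u ⊆ voronoiCell r D B E u :=
  subset_union_left

theorem voronoiCell_subset (h : B u ⊆ E u) : voronoiCell r D B E u ⊆ E u :=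
  union_subset h (sdiff_subset.trans sdiff_subset)

theorem self_mem_voronoiCell_iff : u ∈ voronoiCell r D B E u ↔ u ∈ B u := by
  simp [voronoiCell]

theorem isOpen_voronoiCell [T1Space X] (hB : IsOpen (B u)) (hE : IsOpen (E u)) :
    IsOpen (voronoiCell r D B E u) :=
  hB.union ((hE.sdiff isClosed_singleton).sdiff (isClosed_closure.union isClosed_closure))

theorem disjoint_voronoiCell_of_rel (hu : u ∈ D) (hv : v ∈ D) (hvu : r v u) (huv : u ≠ v)
    (hBE : B v ⊆ E v) (hB : Disjoint (B u) (B v)) :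
    Disjoint (voronoiCell r D B E u) (voronoiCell r D B E v) := by
  refine disjoint_union_left.2 ⟨disjoint_union_right.2 ⟨hB, ?_⟩, ?_⟩
  · exact disjoint_left.2 fun x hxu hxv =>
      hxv.2 (Or.inr (subset_closure (mem_biUnion ⟨hu, huv⟩ hxu)))
  · exact disjoint_right.2 fun x hxv hxu =>
      hxu.2 (Or.inl (subset_closure (mem_biUnion ⟨hv, hvu⟩ (voronoiCell_subset hBE hxv))))

theorem disjoint_voronoiCell [Std.Trichotomous r] (hBE : ∀ w ∈ D, B w ⊆ E w)
    (hB : D.PairwiseDisjoint B) (hu : u ∈ D) (hv : v ∈ D) (huv : u ≠ v) :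
    Disjoint (voronoiCell r D B E u) (voronoiCell r D B E v) := by
  rcases trichotomous_of r u v with h | rfl | h
  · exact (disjoint_voronoiCell_of_rel hv hu h huv.symm (hBE u hu) (hB hv hu huv.symm)).symm
  · exact absurd rfl huv
  · exact disjoint_voronoiCell_of_rel hu hv h huv (hBE v hv) (hB hu hv huv)

theorem iUnion_closure_voronoiCell [T1Space X] [IsWellFounded X r]
    (hiso : ∀ x : X, ¬ IsOpen ({x} : Set X)) (hE : ∀ v, IsOpen (E v))
    (hBlf : LocallyFinite fun v : D => B v) (hElf : LocallyFinite fun v : D => E v)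
    (hcover : ⋃ v ∈ D, E v = univ) :
    ⋃ u ∈ D, closure (voronoiCell r D B E u) = univ := by
  refine eq_univ_of_forall fun x => mem_iUnion₂.2 ?_
  have hS : {v ∈ D | x ∈ closure (E v)}.Nonempty := by
    obtain ⟨v, hv, hxv⟩ := mem_iUnion₂.1 (hcover ▸ mem_univ x)
    exact ⟨v, hv, subset_closure hxv⟩
  obtain ⟨u, ⟨hu, hxu⟩, hmin⟩ := (IsWellFounded.wf (r := r)).has_min _ hS
  by_cases hxB : x ∈ closure (⋃ v ∈ D \ {u}, B v)
  · rw [hBlf.closure_biUnion_of_subset sdiff_subset, mem_iUnion₂] at hxB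
    obtain ⟨v, hv, hxv⟩ := hxB
    exact ⟨v, hv.1, closure_mono subset_voronoiCell hxv⟩
  have hxE : x ∉ closure (⋃ v ∈ {v ∈ D | r v u}, E v) := by
    rw [hElf.closure_biUnion_of_subset (sep_subset _ _), mem_iUnion₂]
    rintro ⟨v, ⟨hv, hvu⟩, hxv⟩
    exact hmin v ⟨hv, hxv⟩ hvu
  -- `u` is not isolated, so puncturing the open envelope does not shrink its closure
  have hxu' : x ∈ closure (E u \ {u}) := closure_minimal
    ((dense_compl_singleton_iff_not_open.2 (hiso u)).open_subset_closure_inter (hE u))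
    isClosed_closure hxu
  have hmem := (isClosed_closure.union isClosed_closure).isOpen_compl.inter_closure
    ⟨not_or.2 ⟨hxE, hxB⟩, hxu'⟩
  refine ⟨u, hu, closure_mono ?_ hmem⟩
  exact fun y hy => Or.inr ⟨hy.2, hy.1⟩

end VoronoiCell

section Delone

variable {X : Type*} [MetricSpace X] {D : Set X} {r R R' : ℝ} {u v : X}

theorem IsDenseWith.mono (h : R ≤ R') (hR : IsDenseWith R D) : IsDenseWith R' D :=
  fun x => (hR x).imp fun _ hy => ⟨hy.1, hy.2.trans h⟩

theorem IsDenseWith.of_RDen_lt (hR : IsDenseWith R D) (h : RDen D < R') : IsDenseWith R' D := by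
  obtain ⟨R'', hR'', hlt⟩ := exists_lt_of_csInf_lt ⟨R, hR⟩ h
  exact IsDenseWith.mono hlt.le hR''

theorem rSep_le_dist (hu : u ∈ D) (hv : v ∈ D) (huv : u ≠ v) : rSep D ≤ dist u v :=
  csInf_le ⟨0, by rintro t ⟨x, -, y, -, -, rfl⟩; exact dist_nonneg⟩ ⟨u, hu, v, hv, huv, rfl⟩

theorem IsDiscreteWith.le_rSep (hdisc : IsDiscreteWith r D) (hD : D.Nontrivial) :
    r ≤ rSep D := by
  obtain ⟨u, hu, v, hv, huv⟩ := hD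
  refine le_csInf ⟨dist u v, u, hu, v, hv, huv, rfl⟩ ?_
  rintro t ⟨x, hx, y, hy, hxy, rfl⟩
  exact hdisc x hx y hy hxy

theorem rSep_eq_zero_of_subsingleton (hD : D.Subsingleton) : rSep D = 0 := by
  have : {t : ℝ | ∃ x ∈ D, ∃ y ∈ D, x ≠ y ∧ t = dist x y} = ∅ :=
    eq_empty_of_forall_notMem fun _ ⟨x, hx, y, hy, hxy, _⟩ => hxy (hD hx hy)
  rw [rSep, this, Real.sInf_empty]

theorem IsDiscreteWith.isClosed (hr : 0 < r) (hdisc : IsDiscreteWith r D) : IsClosed D :=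
  isClosed_of_pairwise_le_dist hr hdisc

theorem IsDiscreteWith.isDiscrete (hr : 0 < r) (hdisc : IsDiscreteWith r D) : IsDiscrete D :=
  ⟨DiscreteTopology.of_forall_le_dist hr fun x y hxy =>
    hdisc x x.2 y y.2 (Subtype.coe_ne_coe.2 hxy)⟩

theorem IsDiscreteWith.finite_inter_closedBall [ProperSpace X] (hr : 0 < r)
    (hdisc : IsDiscreteWith r D) (x : X) (t : ℝ) : (D ∩ closedBall x t).Finite :=
  ((isCompact_closedBall x t).inter_left (hdisc.isClosed hr)).finite
    ((hdisc.isDiscrete hr).mono inter_subset_left)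

theorem IsDiscreteWith.locallyFinite_ball [ProperSpace X] (hr : 0 < r)
    (hdisc : IsDiscreteWith r D) (t : ℝ) : LocallyFinite fun v : D => ball (v : X) t := by
  intro x
  refine ⟨ball x 1, ball_mem_nhds x one_pos,
    ((hdisc.finite_inter_closedBall hr x (t + 1)).preimage Subtype.val_injective.injOn).subset ?_⟩
  rintro v ⟨y, hyv, hyx⟩
  rw [mem_ball] at hyv hyx
  exact ⟨v.2, mem_closedBall.2 (by linarith [dist_triangle_left (v : X) x y])⟩

theorem RDen_pos [Nonempty X] (hiso : ∀ x : X, ¬ IsOpen ({x} : Set X)) (hr : 0 < r)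
    (hdisc : IsDiscreteWith r D) (hdens : IsDenseWith R D) : 0 < RDen D := by
  by_contra! hρ
  have hD : D = univ := by
    refine eq_univ_of_forall fun x => (hdisc.isClosed hr).closure_subset
      (Metric.mem_closure_iff.2 fun ε hε => ?_)
    obtain ⟨y, hy, hxy⟩ := hdens.of_RDen_lt (hρ.trans_lt (half_pos hε)) x
    exact ⟨y, hy, hxy.trans_lt (half_lt_self hε)⟩
  obtain ⟨x⟩ := ‹Nonempty X›
  refine hiso x (Metric.isOpen_singleton_iff.2 ⟨r, hr, fun y hy => ?_⟩)
  by_contra hyx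
  exact (hdisc y (hD ▸ mem_univ y) x (hD ▸ mem_univ x) hyx).not_gt hy

theorem ball_rSep_half_subset_closedBall (hu : u ∈ D) (hdens : IsDenseWith R D) :
    ball u (rSep D / 2) ⊆ closedBall u R := by
  intro x hx
  rw [mem_ball] at hx
  obtain ⟨v, hv, hxv⟩ := hdens x
  rcases eq_or_ne v u with rfl | hvu
  · exact hxv
  · have := rSep_le_dist hu hv hvu.symm
    exact mem_closedBall.2 (by linarith [dist_triangle_left u v x])

theorem pairwiseDisjoint_ball_rSep_half : D.PairwiseDisjoint fun v => ball v (rSep D / 2) :=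
  fun _ hu _ hv huv => ball_disjoint_ball (by rw [add_halves]; exact rSep_le_dist hu hv huv)

theorem ball_rSep_half_subset_ball (hρ : 0 < RDen D) (hdens : IsDenseWith R D) (hu : u ∈ D) :
    ball u (rSep D / 2) ⊆ ball u (2 * RDen D) :=
  (ball_rSep_half_subset_closedBall hu (hdens.of_RDen_lt (by linarith : RDen D < 3 / 2 * RDen D)))
    |>.trans (closedBall_subset_ball (by linarith))

noncomputable def deloneCell (D : Set X) : X → Set X :=
  voronoiCell WellOrderingRel D (fun v => ball v (rSep D / 2)) (fun v => ball v (2 * RDen D))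

theorem isOpen_deloneCell : IsOpen (deloneCell D u) :=
  isOpen_voronoiCell isOpen_ball isOpen_ball

theorem ball_subset_deloneCell : ball u (rSep D / 2) ⊆ deloneCell D u :=
  subset_voronoiCell (B := fun v => ball v (rSep D / 2))

theorem deloneCell_subset_ball (hρ : 0 < RDen D) (hdens : IsDenseWith R D) (hu : u ∈ D) :
    deloneCell D u ⊆ ball u (2 * RDen D) :=
  voronoiCell_subset (ball_rSep_half_subset_ball hρ hdens hu)

theorem disjoint_deloneCell (hρ : 0 < RDen D) (hdens : IsDenseWith R D) (hu : u ∈ D) (hv : v ∈ D)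
    (huv : u ≠ v) : Disjoint (deloneCell D u) (deloneCell D v) :=
  disjoint_voronoiCell (fun _ hw => ball_rSep_half_subset_ball hρ hdens hw)
    pairwiseDisjoint_ball_rSep_half hu hv huv

theorem iUnion_closure_deloneCell [ProperSpace X] (hiso : ∀ x : X, ¬ IsOpen ({x} : Set X))
    (hr : 0 < r) (hdisc : IsDiscreteWith r D) (hρ : 0 < RDen D) (hdens : IsDenseWith R D) :
    ⋃ u ∈ D, closure (deloneCell D u) = univ := by
  refine iUnion_closure_voronoiCell hiso (fun _ => isOpen_ball) (hdisc.locallyFinite_ball hr _)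
    (hdisc.locallyFinite_ball hr _) (eq_univ_of_forall fun x => ?_)
  obtain ⟨v, hv, hxv⟩ := hdens.of_RDen_lt (by linarith : RDen D < 3 / 2 * RDen D) x
  exact mem_biUnion hv (mem_ball.2 (by linarith))

theorem deloneCell_nonempty [ProperSpace X] (hiso : ∀ x : X, ¬ IsOpen ({x} : Set X))
    (hr : 0 < r) (hdisc : IsDiscreteWith r D) (hρ : 0 < RDen D) (hdens : IsDenseWith R D)
    (hu : u ∈ D) : (deloneCell D u).Nonempty := by
  rcases D.subsingleton_or_nontrivial with hD | hD
  · obtain ⟨v, hv, huv⟩ :=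
      mem_iUnion₂.1 ((iUnion_closure_deloneCell hiso hr hdisc hρ hdens).symm ▸ mem_univ u)
    rw [hD hv hu] at huv
    exact closure_nonempty_iff.1 ⟨u, huv⟩
  · exact ⟨u, ball_subset_deloneCell (mem_ball_self (by linarith [hdisc.le_rSep hD]))⟩

theorem compl_deloneCell_nonempty (hr : 0 < r) (hdisc : IsDiscreteWith r D) (hρ : 0 < RDen D)
    (hdens : IsDenseWith R D) (hu : u ∈ D) : (deloneCell D u)ᶜ.Nonempty := by
  rcases D.subsingleton_or_nontrivial with hD | hD
  · refine ⟨u, fun h => ?_⟩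
    rw [deloneCell, self_mem_voronoiCell_iff, rSep_eq_zero_of_subsingleton hD] at h
    simp at h
  · obtain ⟨v, hv, hvu⟩ := hD.exists_ne u
    exact ⟨v, disjoint_left.1 (disjoint_deloneCell hρ hdens hv hu hvu)
      (ball_subset_deloneCell (mem_ball_self (by linarith [hdisc.le_rSep hD])))⟩

end Delone

section NonIsolated

variable {X : Type*} [MetricSpace X]

theorem exists_seq_dist_lt_half {x : X} (hx : ¬ IsOpen ({x} : Set X)) {ρ : ℝ} (hρ : 0 < ρ) :
    ∃ z : ℕ → X, (∀ k, z k ≠ x) ∧ dist (z 0) x < ρ ∧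
      ∀ k, dist (z (k + 1)) x < dist (z k) x / 2 := by
  have hnear : ∀ ε > 0, ∃ y, dist y x < ε ∧ y ≠ x := by
    simpa [Metric.isOpen_singleton_iff] using hx
  have hstep : ∀ y : {y : X // y ≠ x}, ∃ y' : {y : X // y ≠ x},
      dist (y' : X) x < dist (y : X) x / 2 := fun y => by
    obtain ⟨y', hy', hy'x⟩ := hnear _ (half_pos (dist_pos.2 y.2))
    exact ⟨⟨y', hy'x⟩, hy'⟩
  choose g hg using hstep
  obtain ⟨y₀, hy₀, hy₀x⟩ := hnear ρ hρ
  refine ⟨fun k => (g^[k] ⟨y₀, hy₀x⟩ : X), fun k => (g^[k] _).2, hy₀, fun k => ?_⟩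
  simp only [Function.iterate_succ_apply']
  exact hg _

theorem strictAnti_dist_of_dist_lt_half {x : X} {z : ℕ → X} (hzx : ∀ k, z k ≠ x)
    (hz : ∀ k, dist (z (k + 1)) x < dist (z k) x / 2) : StrictAnti fun k => dist (z k) x :=
  strictAnti_nat_of_succ_lt fun k => (hz k).trans (half_lt_self (dist_pos.2 (hzx k)))

theorem pairwise_disjoint_ball_of_dist_lt_half {x : X} {z : ℕ → X} (hzx : ∀ k, z k ≠ x)
    (hz : ∀ k, dist (z (k + 1)) x < dist (z k) x / 2) :
    Pairwise (Disjoint on fun k => ball (z k) (dist (z k) x / 4)) := by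
  have hanti := strictAnti_dist_of_dist_lt_half hzx hz
  refine (pairwise_disjoint_on _).2 fun j k hjk => ball_disjoint_ball ?_
  have hkj : dist (z k) x < dist (z j) x / 2 :=
    (hanti.antitone (Nat.succ_le_of_lt hjk)).trans_lt (hz j)
  linarith [dist_triangle (z j) (z k) x, dist_nonneg (x := z j) (y := x)]

end NonIsolated

theorem exists_measure_diff_lt_of_isOpen {X : Type*} [PseudoMetricSpace X] [MeasurableSpace X]
    [OpensMeasurableSpace X] {μ : Measure X} {V : Set X} (hV : IsOpen V)
    (hμV : μ V ≠ ∞) (hVc : Vᶜ.Nonempty) {ε : ℝ≥0∞} (hε : 0 < ε) :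
    ∃ δ : ℝ, 0 < δ ∧ μ (V \ {x : X | δ < infDist x Vᶜ}) < ε := by
  set s : ℝ → Set X := fun δ => V \ {x : X | δ < infDist x Vᶜ}
  have hs : ∀ δ, MeasurableSet (s δ) := fun δ =>
    hV.measurableSet.diff (measurableSet_lt measurable_const (continuous_infDist_pt _).measurable)
  have hinter : ⋂ δ > 0, s δ = ∅ := by
    refine eq_empty_of_forall_notMem fun x hx => ?_
    simp only [mem_iInter] at hx
    have hpos : 0 < infDist x Vᶜ :=
      (hV.isClosed_compl.notMem_iff_infDist_pos hVc).1 (not_not.2 (hx 1 one_pos).1)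
    exact (hx _ (half_pos hpos)).2 (half_lt_self hpos)
  have htend := tendsto_measure_biInter_gt (μ := μ) (fun δ _ => (hs δ).nullMeasurableSet)
    (fun _ _ _ hij => sdiff_subset_sdiff_right fun _ hx => hij.trans_lt hx)
    ⟨1, one_pos, ne_top_of_le_ne_top hμV (measure_mono sdiff_subset)⟩
  rw [hinter, measure_empty] at htend
  obtain ⟨δ, hδε, hδ⟩ := ((htend.eventually (gt_mem_nhds hε)).and self_mem_nhdsWithin).exists
  exact ⟨δ, hδ, hδε⟩

theorem not_finiteDimensional_Lp_of_pairwise_disjoint {α 𝕜 : Type*} [RCLike 𝕜]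
    [MeasurableSpace α] {ν : Measure α} {S : ℕ → Set α} (hS : ∀ k, MeasurableSet (S k))
    (hdisj : Pairwise (Disjoint on S)) (hpos : ∀ k, ν (S k) ≠ 0) (hfin : ∀ k, ν (S k) ≠ ∞) :
    ¬ FiniteDimensional 𝕜 (Lp 𝕜 2 ν) := by
  intro _
  set e : ℕ → Lp 𝕜 2 ν := fun k => indicatorConstLp 2 (hS k) (hfin k) 1
  have he : ∀ j k, @inner 𝕜 _ _ (e j) (e k) = (ν.real (S j ∩ S k) : 𝕜) := fun j k =>
    L2.inner_indicatorConstLp_one_indicatorConstLp_one (hS j) (hS k) (hfin j) (hfin k)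
  refine Module.Finite.not_linearIndependent_of_infinite e
    (linearIndependent_of_ne_zero_of_inner_eq_zero (𝕜 := 𝕜) (fun k h => ?_) fun j k hjk => ?_)
  · have := he k k
    rw [h, inner_zero_left, inter_self, eq_comm, RCLike.ofReal_eq_zero] at this
    exact ENNReal.toReal_ne_zero.2 ⟨hpos k, hfin k⟩ this
  · show inner 𝕜 (e j) (e k) = 0
    rw [he, (hdisj hjk).inter_eq, measureReal_empty, RCLike.ofReal_zero]

section BoundedGeometry

variable {X : Type*} [MetricSpace X] [MeasurableSpace X] {μ : Measure X}

theorem BoundedGeometry.measure_ball_pos (hμ : BoundedGeometry μ) (x : X) {t : ℝ} (ht : 0 < t) :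
    0 < μ (ball x t) :=
  let ⟨_, _, hc, _, hb⟩ := hμ t ht
  hc.trans_le (hb x).1

theorem BoundedGeometry.measure_ball_lt_top (hμ : BoundedGeometry μ) (x : X) {t : ℝ}
    (ht : 0 < t) : μ (ball x t) < ∞ :=
  let ⟨_, _, _, hC, hb⟩ := hμ t ht
  (hb x).2.trans_lt hC

theorem BoundedGeometry.not_finiteDimensional_Lp_restrict {𝕜 : Type*} [RCLike 𝕜]
    [OpensMeasurableSpace X] (hμ : BoundedGeometry μ) (hiso : ∀ x : X, ¬ IsOpen ({x} : Set X))
    {V : Set X} (hV : IsOpen V) (hVne : V.Nonempty) :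
    ¬ FiniteDimensional 𝕜 (Lp 𝕜 2 (μ.restrict V)) := by
  obtain ⟨x, hx⟩ := hVne
  obtain ⟨ρ, hρ, hxV⟩ := Metric.isOpen_iff.1 hV x hx
  obtain ⟨z, hzx, hz0, hz⟩ := exists_seq_dist_lt_half (hiso x) (half_pos hρ)
  have hd : ∀ k, 0 < dist (z k) x / 4 := fun k => by linarith [dist_pos.2 (hzx k)]
  have hSV : ∀ k, ball (z k) (dist (z k) x / 4) ⊆ V := fun k => by
    have : dist (z k) x ≤ dist (z 0) x :=
      (strictAnti_dist_of_dist_lt_half hzx hz).antitone k.zero_le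
    exact (ball_subset_ball' (by linarith)).trans hxV
  refine not_finiteDimensional_Lp_of_pairwise_disjoint (fun _ => measurableSet_ball)
    (pairwise_disjoint_ball_of_dist_lt_half hzx hz) (fun k => ?_) fun k =>
      ne_top_of_le_ne_top (hμ.measure_ball_lt_top _ (hd k)).ne (Measure.restrict_apply_le _ _)
  rw [Measure.restrict_apply measurableSet_ball, inter_eq_left.2 (hSV k)]
  exact (hμ.measure_ball_pos _ (hd k)).ne'

end BoundedGeometry

/-- Existence of a Voronoi-type partition `{V_u}_{u∈D}` of a proper metric measure space
of bounded geometry with no isolated points, satisfying (V1)–(V4). -/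
theorem exists_voronoi_partition {X : Type*} [MetricSpace X] [ProperSpace X]
    [MeasurableSpace X] [BorelSpace X] (μ : Measure X) (hbg : BoundedGeometry μ)
    (hiso : ∀ x : X, ¬ IsOpen ({x} : Set X))
    (D : Set X) (hD : IsDelone D) :
    ∃ V : X → Set X,
      (∀ u ∈ D, IsOpen (V u)) ∧
      (∀ u ∈ D, ball u (rSep D / 2) ⊆ V u ∧ V u ⊆ ball u (2 * RDen D)) ∧
      (∀ u ∈ D, ∀ v ∈ D, u ≠ v → V u ∩ V v = ∅) ∧
      (⋃ u ∈ D, closure (V u)) = Set.univ ∧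
      (∀ u ∈ D, ∀ ε : ℝ≥0∞, 0 < ε → ∃ δ : ℝ, 0 < δ ∧
        μ (V u \ {x : X | δ < Metric.infDist x (V u)ᶜ}) < ε) ∧
      (∀ u ∈ D, ¬ FiniteDimensional ℂ (Lp ℂ 2 (μ.restrict (V u)))) := by
  rcases isEmpty_or_nonempty X with hX | hX
  · exact ⟨fun _ => ∅, by simp [eq_empty_of_isEmpty]⟩
  obtain ⟨r, hr, R, -, hdisc, hdens⟩ := hD
  have hρ : 0 < RDen D := RDen_pos hiso hr hdisc hdens
  refine ⟨deloneCell D, fun u _ => isOpen_deloneCell,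
    fun u hu => ⟨ball_subset_deloneCell, deloneCell_subset_ball hρ hdens hu⟩,
    fun u hu v hv huv => (disjoint_deloneCell hρ hdens hu hv huv).inter_eq,
    iUnion_closure_deloneCell hiso hr hdisc hρ hdens, fun u hu ε hε => ?_, fun u hu => ?_⟩
  · have hfin : μ (deloneCell D u) ≠ ∞ := ne_top_of_le_ne_top
      (hbg.measure_ball_lt_top u (by linarith)).ne
      (measure_mono (deloneCell_subset_ball hρ hdens hu))
    exact exists_measure_diff_lt_of_isOpen isOpen_deloneCell hfin
      (compl_deloneCell_nonempty hr hdisc hρ hdens hu) hε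
  · exact hbg.not_finiteDimensional_Lp_restrict hiso isOpen_deloneCell
      (deloneCell_nonempty hiso hr hdisc hρ hdens hu)
end

section
/- Let (X,d,μ) be a proper metric measure space of bounded geometry, let V ⊆ X be an open set such that for every ε > 0 there exists δ > 0 with μ(V \ V^{(-δ)}) < ε, where V^{(-δ)} = {x ∈ X : d(x, X \ V) > δ}. For each n ∈ ℕ let D_n ⊆ X be an (r_n, R_n)-Delone set with lim_{n→∞} R_n = 0, and let {φ^n_v}_{v∈D_n} be Borel measurable functions φ^n_v : X → [0,1] with φ^n_v(x) = 0 whenever d(x,v) ≥ 2R_n and Σ_{v∈D_n} φ^n_v(x) = 1 for all x ∈ X. Let Q_n denote the orthogonal projection of L²(V,μ) onto the closure of the linear span of {φ^n_v : v ∈ D_n, supp φ^n_v ⊆ V}. Then Q_n converges strongly to the identity operator on L²(V,μ): for every f ∈ L²(V,μ), ‖Q_n f - f‖_{L²(V)} → 0 as n → ∞. -/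
/-!
Since `Q_n f` is the best approximation of `f` from `K_n`, it suffices to find elements of `K_n`
close to `f`. First replace `f` by a continuous compactly supported `h`, then `h` by the interpolant
`∑ h(v) φ_v`, the sum running over the finitely many `v` with `h(v) ≠ 0` whose bump lies in `V`.
Where the `4R_n`-neighbourhood of `x` lies in `V`, every bump seen by `x` takes part, so the error
at `x` is at most the oscillation of `h` on scale `2R_n`. On the remaining inner boundary layer of
`V` the error is at most `2 sup |h|`, and that layer has small measure.
-/

open Metric Set MeasureTheory Filter ENNReal

open Topology

section Projection

variable {𝕜 E : Type*} [RCLike 𝕜] [NormedAddCommGroup E] [InnerProductSpace 𝕜 E]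

lemma norm_sub_le_of_sub_mem_orthogonal {K : Submodule 𝕜 E} {f q g : E} (hq : q ∈ K)
    (hperp : f - q ∈ Kᗮ) (hg : g ∈ K) : ‖f - q‖ ≤ ‖f - g‖ := by
  have horth : inner 𝕜 (f - q) (q - g) = 0 :=
    (Submodule.mem_orthogonal' K (f - q)).mp hperp _ (K.sub_mem hq hg)
  have hpyth : ‖f - g‖ * ‖f - g‖ = ‖f - q‖ * ‖f - q‖ + ‖q - g‖ * ‖q - g‖ := by
    rw [← norm_add_sq_eq_norm_sq_add_norm_sq_of_inner_eq_zero _ _ horth, sub_add_sub_cancel]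
  nlinarith [norm_nonneg (f - q), norm_nonneg (f - g), sq_nonneg ‖q - g‖]

lemma tendsto_norm_sub_of_forall_eventually_exists_near {K : ℕ → Submodule 𝕜 E} {P : ℕ → E}
    {f : E} (hP : ∀ n, P n ∈ K n ∧ f - P n ∈ (K n)ᗮ)
    (happrox : ∀ ε > 0, ∀ᶠ n in atTop, ∃ g ∈ K n, ‖f - g‖ < ε) :
    Tendsto (fun n => ‖P n - f‖) atTop (𝓝 0) := by
  refine tendsto_order.2 ⟨fun a ha => Eventually.of_forall fun n => ha.trans_le (norm_nonneg _),
    fun ε hε => (happrox ε hε).mono fun n ⟨g, hg, hfg⟩ => ?_⟩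
  rw [norm_sub_rev]
  exact (norm_sub_le_of_sub_mem_orthogonal (hP n).1 (hP n).2 hg).trans_lt hfg

end Projection

section Lp

variable {α F : Type*} [MeasurableSpace α] [NormedAddCommGroup F] {μ : Measure α} {p : ℝ≥0∞}

lemma eLpNorm_le_of_norm_le_indicator_add_indicator (hp : 1 ≤ p) (hp_top : p ≠ ∞) {u : α → F}
    {s t : Set α} (hs : MeasurableSet s) (ht : MeasurableSet t) {a b : ℝ}
    (hu : ∀ x, ‖u x‖ ≤ s.indicator (fun _ => a) x + t.indicator (fun _ => b) x) :
    eLpNorm u p μ ≤ ‖a‖ₑ * μ s ^ (1 / p.toReal) + ‖b‖ₑ * μ t ^ (1 / p.toReal) := by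
  have hp0 : p ≠ 0 := (zero_lt_one.trans_le hp).ne'
  calc eLpNorm u p μ ≤ eLpNorm (s.indicator (fun _ => a) + t.indicator fun _ => b) p μ :=
        eLpNorm_mono_real hu
    _ ≤ eLpNorm (s.indicator fun _ => a) p μ + eLpNorm (t.indicator fun _ => b) p μ :=
        eLpNorm_add_le (aestronglyMeasurable_const.indicator hs)
          (aestronglyMeasurable_const.indicator ht) hp
    _ = ‖a‖ₑ * μ s ^ (1 / p.toReal) + ‖b‖ₑ * μ t ^ (1 / p.toReal) := by
        rw [eLpNorm_indicator_const hs hp0 hp_top, eLpNorm_indicator_const ht hp0 hp_top]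

lemma MeasureTheory.Lp.norm_sub_lt_of_eLpNorm_add_lt [Fact (1 ≤ p)] (f g : Lp F p μ) {h : α → F}
    (hh : AEStronglyMeasurable h μ) {ε : ℝ}
    (hfg : eLpNorm (⇑f - h) p μ + eLpNorm (h - ⇑g) p μ < ENNReal.ofReal ε) : ‖f - g‖ < ε := by
  rw [Lp.norm_def, eLpNorm_congr_ae (Lp.coeFn_sub f g)]
  refine toReal_lt_of_lt_ofReal (lt_of_le_of_lt ?_ hfg)
  rw [← sub_add_sub_cancel (⇑f) h (⇑g)]
  exact eLpNorm_add_le ((Lp.aestronglyMeasurable f).sub hh) (hh.sub (Lp.aestronglyMeasurable g))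
    Fact.out

lemma MeasureTheory.Lp.coeFn_finset_sum_smul_toLp {ι 𝕜 : Type*} [NormedField 𝕜] [NormedSpace 𝕜 F]
    (s : Finset ι) (c : ι → 𝕜) (f : ι → α → F) (hf : ∀ i, MemLp (f i) p μ) :
    ((∑ i ∈ s, c i • (hf i).toLp (f i) : Lp F p μ) : α → F) =ᵐ[μ]
      fun x => ∑ i ∈ s, c i • f i x := by
  classical
  induction s using Finset.cons_induction with
  | empty => simp only [Finset.sum_empty]; exact Lp.coeFn_zero F p μ
  | cons i s his ih =>
    simp only [Finset.sum_cons]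
    filter_upwards [Lp.coeFn_add (c i • (hf i).toLp (f i)) (∑ j ∈ s, c j • (hf j).toLp (f j)),
      Lp.coeFn_smul (c i) ((hf i).toLp (f i)), (hf i).coeFn_toLp, ih] with x h1 h2 h3 h4
    simp only [h1, Pi.add_apply, h2, Pi.smul_apply, h3, h4]

end Lp

lemma BoundedGeometry.isLocallyFiniteMeasure {X : Type*} [MetricSpace X] [MeasurableSpace X]
    {μ : Measure X} (hbg : BoundedGeometry μ) : IsLocallyFiniteMeasure μ := by
  obtain ⟨c, C, -, hC, hball⟩ := hbg 1 one_pos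
  exact ⟨fun x => ⟨ball x 1, ball_mem_nhds x one_pos, (hball x).2.trans_lt hC⟩⟩

lemma IsDiscreteWith.finite_inter_of_isCompact {X : Type*} [MetricSpace X] {r : ℝ} {D : Set X}
    (hD : IsDiscreteWith r D) (hr : 0 < r) {S : Set X} (hS : IsCompact S) : (D ∩ S).Finite := by
  obtain ⟨t, ht, hcover⟩ := totallyBounded_iff.mp hS.totallyBounded (r / 2) (half_pos hr)
  refine (ht.biUnion fun y _ => (?_ : (D ∩ ball y (r / 2)).Subsingleton).finite).subset
    fun x hx => ?_
  · intro a ha b hb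
    by_contra hab
    linarith [hD a ha.1 b hb.1 hab, dist_triangle_right a b y, mem_ball.mp ha.2, mem_ball.mp hb.2]
  · obtain ⟨y, hy, hxy⟩ := mem_iUnion₂.mp (hcover hx.2)
    exact mem_iUnion₂.mpr ⟨y, hy, hx.1, hxy⟩

structure IsBallPartitionOfUnity {X : Type*} [MetricSpace X] [MeasurableSpace X] (D : Set X)
    (ρ : ℝ) (φ : X → X → ℝ) : Prop where
  measurable : ∀ v ∈ D, Measurable (φ v)
  mem_Icc : ∀ v ∈ D, ∀ x, φ v x ∈ Icc (0 : ℝ) 1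
  eq_zero_of_le_dist : ∀ v ∈ D, ∀ x, ρ ≤ dist x v → φ v x = 0
  hasSum : ∀ x, HasSum (fun v : D => φ v x) 1

noncomputable def bumpSpan {X : Type*} [MetricSpace X] [MeasurableSpace X] (μ : Measure X)
    (V D : Set X) (φ : X → X → ℝ) : Submodule ℂ (Lp ℂ 2 (μ.restrict V)) :=
  Submodule.span ℂ {g | ∃ v ∈ D, Function.support (φ v) ⊆ V ∧
    (g : X → ℂ) =ᵐ[μ.restrict V] fun x => (φ v x : ℂ)}

namespace IsBallPartitionOfUnity

variable {X : Type*} [MetricSpace X] [MeasurableSpace X] {D : Set X} {ρ : ℝ} {φ : X → X → ℝ}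

lemma dist_lt (hP : IsBallPartitionOfUnity D ρ φ) {v x : X} (hv : v ∈ D) (hx : φ v x ≠ 0) :
    dist x v < ρ :=
  lt_of_not_ge fun h => hx (hP.eq_zero_of_le_dist v hv x h)

lemma radius_pos (hP : IsBallPartitionOfUnity D ρ φ) (x : X) : 0 < ρ := by
  by_contra! hρ
  have hzero : (fun v : D => φ v x) = 0 :=
    funext fun v => hP.eq_zero_of_le_dist v v.2 x (hρ.trans dist_nonneg)
  exact one_ne_zero ((hP.hasSum x).unique (hzero ▸ hasSum_zero))

lemma support_subset_of_two_mul_le_infDist (hP : IsBallPartitionOfUnity D ρ φ) {V : Set X}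
    {v x : X} (hv : v ∈ D) (hx : φ v x ≠ 0) (hxV : 2 * ρ ≤ infDist x Vᶜ) :
    Function.support (φ v) ⊆ V := by
  intro y hy
  by_contra hyV
  linarith [infDist_le_dist_of_mem (x := x) (show y ∈ Vᶜ from hyV), dist_triangle_right x y v,
    hP.dist_lt hv hx, hP.dist_lt hv hy]

lemma memLp_ofReal [ProperSpace X] [BorelSpace X] (hP : IsBallPartitionOfUnity D ρ φ) {v : X}
    (hv : v ∈ D) (p : ℝ≥0∞) (μ : Measure X) [IsFiniteMeasureOnCompacts μ] :
    MemLp (fun x => (φ v x : ℂ)) p μ := by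
  refine (memLp_indicator_const p measurableSet_ball (1 : ℝ)
    (Or.inr (measure_ball_lt_top (μ := μ) (x := v) (r := ρ)).ne)).of_le
    (Complex.measurable_ofReal.comp (hP.measurable v hv)).aestronglyMeasurable
    (Eventually.of_forall fun x => ?_)
  have h01 := hP.mem_Icc v hv x
  by_cases hx : x ∈ ball v ρ
  · rw [indicator_of_mem hx, Complex.norm_real, Real.norm_of_nonneg h01.1, norm_one]
    exact h01.2
  · rw [indicator_of_notMem hx, hP.eq_zero_of_le_dist v hv x (not_lt.1 hx)]
    simp

lemma exists_mem_bumpSpan_ae_eq_sum [ProperSpace X] [BorelSpace X]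
    (hP : IsBallPartitionOfUnity D ρ φ) {μ : Measure X} [IsFiniteMeasureOnCompacts μ]
    {V : Set X} (F : Finset D) (hF : ∀ v ∈ F, Function.support (φ v) ⊆ V) (c : D → ℂ) :
    ∃ g ∈ bumpSpan μ V D φ, (g : X → ℂ) =ᵐ[μ.restrict V] fun x => ∑ v ∈ F, φ v x • c v := by
  refine ⟨∑ v ∈ F, c v • (hP.memLp_ofReal v.2 2 (μ.restrict V)).toLp _,
    Submodule.sum_mem _ fun v hv => Submodule.smul_mem _ _ (Submodule.subset_span
      ⟨v, v.2, hF v hv, MemLp.coeFn_toLp _⟩), ?_⟩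
  filter_upwards [Lp.coeFn_finset_sum_smul_toLp F c _ fun v => hP.memLp_ofReal v.2 2 _]
    with x hx
  simp only [hx, smul_eq_mul, Complex.real_smul, mul_comm]

variable {E : Type*} [NormedAddCommGroup E] [NormedSpace ℝ E]

lemma norm_sub_sum_smul_le (hP : IsBallPartitionOfUnity D ρ φ) {h : X → E} {η : ℝ} {x : X}
    (F : Finset D) (hF : ∀ v : D, φ v x ≠ 0 → h v ≠ 0 → v ∈ F)
    (hη : ∀ y, dist x y < ρ → ‖h x - h y‖ ≤ η) :
    ‖h x - ∑ v ∈ F, φ v x • h v‖ ≤ η := by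
  have hsumF : HasSum (fun v : D => φ v x • h v) (∑ v ∈ F, φ v x • h v) :=
    hasSum_sum_of_ne_finset_zero fun v hv => by
      by_contra hne
      exact hv (hF v (left_ne_zero_of_smul hne) (right_ne_zero_of_smul hne))
  have hsumx : HasSum (fun v : D => φ v x • h x) (h x) := by
    simpa using (hP.hasSum x).smul_const (h x)
  refine ((hsumx.sub hsumF).norm_le_of_bounded ((hP.hasSum x).mul_left η) fun v => ?_).trans_eq
    (mul_one η)
  have h0 := (hP.mem_Icc v v.2 x).1
  rw [← smul_sub, norm_smul, Real.norm_of_nonneg h0, mul_comm]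
  rcases eq_or_ne (φ v x) 0 with hv | hv
  · simp [hv]
  · exact mul_le_mul_of_nonneg_right (hη v (hP.dist_lt v.2 hv)) h0

lemma norm_sum_smul_le (hP : IsBallPartitionOfUnity D ρ φ) {h : X → E} {M : ℝ}
    (hM : ∀ y, ‖h y‖ ≤ M) (x : X) (F : Finset D) : ‖∑ v ∈ F, φ v x • h v‖ ≤ M := by
  calc ‖∑ v ∈ F, φ v x • h v‖ ≤ ∑ v ∈ F, φ v x * M := by
        refine (norm_sum_le _ _).trans (Finset.sum_le_sum fun v _ => ?_)
        rw [norm_smul, Real.norm_of_nonneg (hP.mem_Icc v v.2 x).1]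
        exact mul_le_mul_of_nonneg_left (hM v) (hP.mem_Icc v v.2 x).1
    _ = (∑ v ∈ F, φ v x) * M := (Finset.sum_mul ..).symm
    _ ≤ 1 * M := mul_le_mul_of_nonneg_right
        (sum_le_hasSum F (fun v _ => (hP.mem_Icc v v.2 x).1) (hP.hasSum x))
        ((norm_nonneg _).trans (hM x))
    _ = M := one_mul M

lemma norm_sub_sum_smul_le_indicator (hP : IsBallPartitionOfUnity D ρ φ) {h : X → E}
    {η M : ℝ} {V B : Set X} (F : Finset D)
    (hF : ∀ v : D, h v ≠ 0 → Function.support (φ v) ⊆ V → v ∈ F)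
    (hη : ∀ x y, dist x y < ρ → ‖h x - h y‖ ≤ η) (hM : ∀ y, ‖h y‖ ≤ M)
    (hB : thickening ρ (tsupport h) ⊆ B) (x : X) :
    ‖h x - ∑ v ∈ F, φ v x • h v‖ ≤
      B.indicator (fun _ => η) x + Set.indicator {y | infDist y Vᶜ < 2 * ρ} (fun _ => 2 * M) x := by
  have hρ := hP.radius_pos x
  have hM0 : 0 ≤ M := (norm_nonneg _).trans (hM x)
  by_cases hxB : x ∈ B
  · have hη0 : 0 ≤ η := by simpa using hη x x (by simpa using hρ)
    rw [indicator_of_mem hxB]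
    by_cases hxV : infDist x Vᶜ < 2 * ρ
    · rw [indicator_of_mem (show x ∈ {y | infDist y Vᶜ < 2 * ρ} from hxV)]
      linarith [norm_sub_le (h x) (∑ v ∈ F, φ v x • h v), hM x, hP.norm_sum_smul_le hM x F]
    · rw [indicator_of_notMem (show x ∉ {y | infDist y Vᶜ < 2 * ρ} from hxV), add_zero]
      exact hP.norm_sub_sum_smul_le F (fun v hφ hh => hF v hh
        (hP.support_subset_of_two_mul_le_infDist v.2 hφ (not_lt.1 hxV))) (hη x)
  · have hvanish : ∀ y, dist x y < ρ → h y = 0 := fun y hy =>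
      image_eq_zero_of_notMem_tsupport fun hy' => hxB (hB (mem_thickening_iff.2 ⟨y, hy', hy⟩))
    have hzero := hP.norm_sub_sum_smul_le F (η := 0)
      (fun v hφ hh => (hh (hvanish v (hP.dist_lt v.2 hφ))).elim)
      (fun y hy => by simp [hvanish x (by simpa using hρ), hvanish y hy])
    rw [indicator_of_notMem hxB, zero_add]
    exact hzero.trans (indicator_nonneg (fun _ _ => by linarith) x)

lemma exists_mem_bumpSpan_eLpNorm_sub_le [ProperSpace X] [BorelSpace X]
    (hP : IsBallPartitionOfUnity D ρ φ) {μ : Measure X} [IsFiniteMeasureOnCompacts μ]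
    {V B : Set X} {r : ℝ} (hr : 0 < r) (hD : IsDiscreteWith r D) {h : X → ℂ}
    (hcs : HasCompactSupport h) {η M : ℝ} (hη : ∀ x y, dist x y < ρ → ‖h x - h y‖ ≤ η)
    (hM : ∀ y, ‖h y‖ ≤ M) (hB : thickening ρ (tsupport h) ⊆ B) (hBm : MeasurableSet B) :
    ∃ g ∈ bumpSpan μ V D φ, eLpNorm (h - ⇑g) 2 (μ.restrict V) ≤
      ‖η‖ₑ * μ.restrict V B ^ (1 / 2 : ℝ) +
        ‖2 * M‖ₑ * μ.restrict V {y | infDist y Vᶜ < 2 * ρ} ^ (1 / 2 : ℝ) := by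
  have hfin : {v : D | h v ≠ 0 ∧ Function.support (φ v) ⊆ V}.Finite :=
    ((hD.finite_inter_of_isCompact hr hcs).preimage Subtype.val_injective.injOn).subset
      fun v hv => ⟨v.2, subset_tsupport h hv.1⟩
  obtain ⟨g, hg, hg_ae⟩ := hP.exists_mem_bumpSpan_ae_eq_sum (μ := μ) hfin.toFinset
    (fun v hv => (hfin.mem_toFinset.1 hv).2) fun v => h v
  refine ⟨g, hg, ?_⟩
  have hdiff : h - ⇑g =ᵐ[μ.restrict V] fun x => h x - ∑ v ∈ hfin.toFinset, φ v x • h v :=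
    hg_ae.mono fun x hx => by simp only [Pi.sub_apply, hx]
  rw [eLpNorm_congr_ae hdiff]
  convert eLpNorm_le_of_norm_le_indicator_add_indicator one_le_two ofNat_ne_top hBm
    (isOpen_lt (continuous_infDist_pt _) continuous_const).measurableSet
    (hP.norm_sub_sum_smul_le_indicator hfin.toFinset
      (fun v hh hV => hfin.mem_toFinset.2 ⟨hh, hV⟩) hη hM hB) using 3 <;> norm_num

end IsBallPartitionOfUnity

theorem eventually_exists_mem_bumpSpan_eLpNorm_sub_lt {X : Type*} [MetricSpace X] [ProperSpace X]
    [MeasurableSpace X] [BorelSpace X] {μ : Measure X} [IsFiniteMeasureOnCompacts μ] {V : Set X}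
    (hshrink : ∀ ε : ℝ≥0∞, 0 < ε → ∃ δ : ℝ, 0 < δ ∧ μ (V \ {x : X | δ < infDist x Vᶜ}) < ε)
    {D : ℕ → Set X} {r R : ℕ → ℝ} (hr : ∀ n, 0 < r n) (hdisc : ∀ n, IsDiscreteWith (r n) (D n))
    (hR0 : Tendsto R atTop (𝓝 0)) {φ : ℕ → X → X → ℝ}
    (hP : ∀ n, IsBallPartitionOfUnity (D n) (2 * R n) (φ n)) {h : X → ℂ} (hc : Continuous h)
    (hcs : HasCompactSupport h) {ε : ℝ≥0∞} (hε : ε ≠ 0) :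
    ∀ᶠ n in atTop, ∃ g ∈ bumpSpan μ V (D n) (φ n), eLpNorm (h - ⇑g) 2 (μ.restrict V) < ε := by
  obtain ⟨M, hM⟩ := hc.bounded_above_of_compact_support hcs
  set B := thickening 1 (tsupport h)
  have hB : μ B ^ (1 / 2 : ℝ) ≠ ∞ :=
    rpow_ne_top_of_nonneg (by norm_num) hcs.isCompact.isBounded.thickening.measure_lt_top.ne
  obtain ⟨η, hη0, hηB⟩ := exists_nnreal_pos_mul_lt hB (ENNReal.half_pos hε).ne'
  obtain ⟨κ, hκ0, hκM⟩ :=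
    exists_nnreal_pos_mul_lt (enorm_ne_top : ‖2 * M‖ₑ ≠ ∞) (ENNReal.half_pos hε).ne'
  obtain ⟨δ, hδ0, hδ⟩ := hshrink ((κ : ℝ≥0∞) ^ (2 : ℝ)) (by positivity)
  obtain ⟨t, ht0, ht⟩ :=
    Metric.uniformContinuous_iff.1 (hcs.uniformContinuous_of_continuous hc) η hη0
  filter_upwards [hR0.eventually (gt_mem_nhds one_half_pos), hR0.eventually (gt_mem_nhds
    (half_pos ht0)), hR0.eventually (gt_mem_nhds (by positivity : 0 < δ / 4))] with n h1 ht' hδ'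
  obtain ⟨g, hg, hgh⟩ := (hP n).exists_mem_bumpSpan_eLpNorm_sub_le (μ := μ) (V := V) (hr n)
    (hdisc n) hcs (η := η)
    (fun x y hxy => (dist_eq_norm (h x) (h y) ▸ ht (hxy.trans (by linarith))).le) hM
    (thickening_mono (by linarith : 2 * R n ≤ 1) _) isOpen_thickening.measurableSet
  have hlayer : μ.restrict V {y | infDist y Vᶜ < 2 * (2 * R n)} ^ (1 / 2 : ℝ) ≤ κ := by
    have hsub : {y | infDist y Vᶜ < 2 * (2 * R n)} ∩ V ⊆ V \ {x | δ < infDist x Vᶜ} :=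
      fun y hy => ⟨hy.2, fun hδy => by
        have hy' : infDist y Vᶜ < 2 * (2 * R n) := hy.1
        have hδy' : δ < infDist y Vᶜ := hδy
        linarith⟩
    calc μ.restrict V {y | infDist y Vᶜ < 2 * (2 * R n)} ^ (1 / 2 : ℝ)
        ≤ ((κ : ℝ≥0∞) ^ (2 : ℝ)) ^ (1 / 2 : ℝ) := by
          rw [Measure.restrict_apply
            (isOpen_lt (continuous_infDist_pt _) continuous_const).measurableSet]
          exact rpow_le_rpow ((measure_mono hsub).trans hδ.le) (by norm_num)
      _ = κ := by rw [← rpow_mul]; norm_num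
  refine ⟨g, hg, hgh.trans_lt ?_⟩
  calc ‖(η : ℝ)‖ₑ * μ.restrict V B ^ (1 / 2 : ℝ) +
        ‖2 * M‖ₑ * μ.restrict V {y | infDist y Vᶜ < 2 * (2 * R n)} ^ (1 / 2 : ℝ)
      ≤ η * μ B ^ (1 / 2 : ℝ) + κ * ‖2 * M‖ₑ := by
        rw [mul_comm (κ : ℝ≥0∞)]
        gcongr
        · simp
        · exact Measure.restrict_le_self
    _ < ε / 2 + ε / 2 := ENNReal.add_lt_add hηB hκM
    _ = ε := ENNReal.add_halves ε

theorem projections_tendsto_id_on_cell_general {X : Type*} [MetricSpace X] [ProperSpace X]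
    [MeasurableSpace X] [BorelSpace X] (μ : Measure X) (hbg : BoundedGeometry μ)
    (V : Set X)
    (hshrink : ∀ ε : ℝ≥0∞, 0 < ε → ∃ δ : ℝ, 0 < δ ∧
      μ (V \ {x : X | δ < Metric.infDist x Vᶜ}) < ε)
    (D : ℕ → Set X) (r R : ℕ → ℝ) (hr : ∀ n, 0 < r n)
    (hdisc : ∀ n, IsDiscreteWith (r n) (D n))
    (hR0 : Tendsto R atTop (nhds 0))
    (φ : ℕ → X → X → ℝ)
    (hmeas : ∀ n, ∀ v ∈ D n, Measurable (φ n v))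
    (hrange : ∀ n, ∀ v ∈ D n, ∀ x : X, φ n v x ∈ Icc (0 : ℝ) 1)
    (hsupp : ∀ n, ∀ v ∈ D n, ∀ x : X, 2 * R n ≤ dist x v → φ n v x = 0)
    (hsum : ∀ n, ∀ x : X, HasSum (fun v : D n => φ n v.1 x) 1)
    (K : ℕ → Submodule ℂ (Lp ℂ 2 (μ.restrict V)))
    (hK : ∀ n, K n = (Submodule.span ℂ
      {g : Lp ℂ 2 (μ.restrict V) | ∃ v ∈ D n, Function.support (φ n v) ⊆ V ∧
        (g : X → ℂ) =ᵐ[μ.restrict V] fun x => (φ n v x : ℂ)}).topologicalClosure)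
    (Q : ℕ → Lp ℂ 2 (μ.restrict V) →L[ℂ] Lp ℂ 2 (μ.restrict V))
    (hQ : ∀ n, ∀ f : Lp ℂ 2 (μ.restrict V), Q n f ∈ K n ∧ f - Q n f ∈ (K n)ᗮ) :
    ∀ f : Lp ℂ 2 (μ.restrict V), Tendsto (fun n => ‖Q n f - f‖) atTop (nhds 0) := by
  intro f
  have := hbg.isLocallyFiniteMeasure
  have hP : ∀ n, IsBallPartitionOfUnity (D n) (2 * R n) (φ n) :=
    fun n => ⟨hmeas n, hrange n, hsupp n, hsum n⟩
  refine tendsto_norm_sub_of_forall_eventually_exists_near (hQ · f) fun ε hε => ?_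
  have hε2 : ENNReal.ofReal (ε / 2) ≠ 0 := (ENNReal.ofReal_pos.2 (half_pos hε)).ne'
  obtain ⟨h, hcs, hfh, hc, -⟩ :=
    (Lp.memLp f).exists_hasCompactSupport_eLpNorm_sub_le ofNat_ne_top hε2
  filter_upwards [eventually_exists_mem_bumpSpan_eLpNorm_sub_lt hshrink hr hdisc hR0 hP hc hcs hε2]
    with n ⟨g, hg, hhg⟩
  refine ⟨g, hK n ▸ Submodule.le_topologicalClosure _ hg,
    Lp.norm_sub_lt_of_eLpNorm_add_lt f g hc.aestronglyMeasurable ?_⟩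
  calc eLpNorm (⇑f - h) 2 (μ.restrict V) + eLpNorm (h - ⇑g) 2 (μ.restrict V)
      < ENNReal.ofReal (ε / 2) + ENNReal.ofReal (ε / 2) :=
        ENNReal.add_lt_add_of_le_of_lt (hfh.trans_lt ofReal_lt_top).ne hfh hhg
    _ = ENNReal.ofReal ε := by
        rw [← ENNReal.ofReal_add (half_pos hε).le (half_pos hε).le, add_halves]

/-- Let `V` be an open set whose inner boundary layers have small measure. The orthogonal
projections `Q_n` of `L²(V,μ)` onto the spans of those members of the partitions of unity
subordinate to `D_n` whose supports lie in `V` converge strongly to the identity. -/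
theorem projections_tendsto_id_on_cell {X : Type*} [MetricSpace X] [ProperSpace X]
    [MeasurableSpace X] [BorelSpace X] (μ : Measure X) (hbg : BoundedGeometry μ)
    (V : Set X) (hVopen : IsOpen V)
    (hshrink : ∀ ε : ℝ≥0∞, 0 < ε → ∃ δ : ℝ, 0 < δ ∧
      μ (V \ {x : X | δ < Metric.infDist x Vᶜ}) < ε)
    (D : ℕ → Set X) (r R : ℕ → ℝ) (hr : ∀ n, 0 < r n)
    (hdisc : ∀ n, IsDiscreteWith (r n) (D n))
    (hdense : ∀ n, IsDenseWith (R n) (D n))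
    (hR0 : Tendsto R atTop (nhds 0))
    (φ : ℕ → X → X → ℝ)
    (hmeas : ∀ n, ∀ v ∈ D n, Measurable (φ n v))
    (hrange : ∀ n, ∀ v ∈ D n, ∀ x : X, φ n v x ∈ Icc (0 : ℝ) 1)
    (hsupp : ∀ n, ∀ v ∈ D n, ∀ x : X, 2 * R n ≤ dist x v → φ n v x = 0)
    (hsum : ∀ n, ∀ x : X, HasSum (fun v : D n => φ n v.1 x) 1)
    (K : ℕ → Submodule ℂ (Lp ℂ 2 (μ.restrict V)))
    (hK : ∀ n, K n = (Submodule.span ℂ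
      {g : Lp ℂ 2 (μ.restrict V) | ∃ v ∈ D n, Function.support (φ n v) ⊆ V ∧
        (g : X → ℂ) =ᵐ[μ.restrict V] fun x => (φ n v x : ℂ)}).topologicalClosure)
    (Q : ℕ → Lp ℂ 2 (μ.restrict V) →L[ℂ] Lp ℂ 2 (μ.restrict V))
    (hQ : ∀ n, ∀ f : Lp ℂ 2 (μ.restrict V), Q n f ∈ K n ∧ f - Q n f ∈ (K n)ᗮ) :
    ∀ f : Lp ℂ 2 (μ.restrict V), Tendsto (fun n => ‖Q n f - f‖) atTop (nhds 0) :=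
  projections_tendsto_id_on_cell_general μ hbg V hshrink D r R hr hdisc hR0 φ hmeas hrange hsupp
    hsum K hK Q hQ
end
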